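/- arXiv:1307.3259 — 5 statements merged into one kernel-verified Lean document; each statement's English description precedes it below -/
import Mathlib

section
/- (Comparison principle, subsolution part.) Let α ∈ (0,2). Let u : ℝ → ℝ be a continuous positive solution of the boundary value problem (-Δ)^{α/2} u(x) + u(x)²/2 = 0 for x > 0, u(x) = 1 for x ≤ 0, with u(x) → 0 as x → ∞. Let V : ℝ → ℝ be a continuous positive subsolution, i.e. V(x) > 0 for all x, V(x) ≤ 1 for all x ≤ 0, and for every x > 0 the principal value (-Δ)^{α/2} V(x) exists and satisfies (-Δ)^{α/2} V(x) + V(x)²/2 ≤ 0; assume also V(x) → 0 as x → ∞. Then u(x) ≥ V(x) for all x ∈ ℝ. -/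
open MeasureTheory Filter Topology Set

/-- The fractional Laplacian `(-Δ)^{α/2} f (x)` exists (as a principal value) and equals `L`:
`(-Δ)^{α/2} f(x) = lim_{ε→0⁺} ∫_{|y-x|>ε} (f(x) - f(y))/|x-y|^{1+α} dy`. -/
def fracLapPV (α : ℝ) (f : ℝ → ℝ) (x L : ℝ) : Prop :=
  Tendsto (fun ε : ℝ =>
      ∫ y in {y : ℝ | ε < |y - x|}, (f x - f y) / |x - y| ^ (1 + α))
    (𝓝[>] (0 : ℝ)) (𝓝 L)

lemma aux_set_eq (x ε : ℝ) : {y : ℝ | ε < |y - x|} = Iio (x - ε) ∪ Ioi (x + ε) := by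
  ext y
  simp only [mem_setOf_eq, mem_union, mem_Iio, mem_Ioi, lt_abs]
  constructor
  · rintro (h | h)
    · right; linarith
    · left; linarith
  · rintro (h | h)
    · right; linarith
    · left; linarith

lemma aux_isOpen (x ε : ℝ) : IsOpen {y : ℝ | ε < |y - x|} := by
  have : Continuous (fun y : ℝ => |y - x|) := (continuous_id.sub continuous_const).abs
  exact isOpen_lt continuous_const this

/-- Integrability of the kernel away from the singularity. -/
lemma aux_kernel_int (p : ℝ) (hp : p < -1) (x ε : ℝ) (hε : 0 < ε) :
    IntegrableOn (fun y : ℝ => |x - y| ^ p) {y : ℝ | ε < |y - x|} := by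
  rw [aux_set_eq]
  have hbase : IntegrableOn (fun t : ℝ => t ^ p) (Ioi ε) :=
    integrableOn_Ioi_rpow_of_lt hp hε
  refine IntegrableOn.union ?_ ?_
  · -- left half-line, via the map `t ↦ x - t`
    have hmp : MeasurePreserving (fun t : ℝ => x - t) (volume : Measure ℝ) volume := by
      have := (measurePreserving_add_left (volume : Measure ℝ) x).comp
        (Measure.measurePreserving_neg (volume : Measure ℝ))
      simpa [Function.comp_def, sub_eq_add_neg] using this
    have hemb : MeasurableEmbedding (fun t : ℝ => x - t) :=
      (MeasurableEquiv.subLeft x).measurableEmbedding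
    have h2 := (MeasurePreserving.integrableOn_comp_preimage hmp hemb
      (f := fun t : ℝ => t ^ p) (s := Ioi ε)).2 hbase
    have hpre : (fun t : ℝ => x - t) ⁻¹' Ioi ε = Iio (x - ε) := by
      ext y; simp only [mem_preimage, mem_Ioi, mem_Iio]; constructor <;> intro h <;> linarith
    rw [hpre] at h2
    refine h2.congr_fun (fun y hy => ?_) measurableSet_Iio
    have : (0:ℝ) < x - y := by
      simp only [mem_Iio] at hy; linarith
    rw [Function.comp_apply, abs_of_pos this]
  · -- right half-line, via the map `t ↦ t - x`
    have h2 := (MeasurePreserving.integrableOn_comp_preimage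
      (measurePreserving_sub_right (volume : Measure ℝ) x)
      (MeasurableEquiv.subRight x).measurableEmbedding
      (f := fun t : ℝ => t ^ p) (s := Ioi ε)).2 hbase
    have hpre : (fun t : ℝ => t - x) ⁻¹' Ioi ε = Ioi (x + ε) := by
      ext y; simp only [mem_preimage, mem_Ioi]; constructor <;> intro h <;> linarith
    rw [hpre] at h2
    refine h2.congr_fun (fun y hy => ?_) measurableSet_Ioi
    have : (0:ℝ) < y - x := by
      simp only [mem_Ioi] at hy; linarith
    rw [Function.comp_apply, abs_sub_comm, abs_of_pos this]

/-- Integrability of the truncated fractional Laplacian integrand for a bounded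
continuous function. -/
lemma aux_integrand_int (α : ℝ) (hα : 0 < α) (f : ℝ → ℝ) (hf : Continuous f)
    (C : ℝ) (hC : ∀ y : ℝ, |f y| ≤ C) (x ε : ℝ) (hε : 0 < ε) :
    IntegrableOn (fun y : ℝ => (f x - f y) / |x - y| ^ (1 + α)) {y : ℝ | ε < |y - x|} := by
  have hker := aux_kernel_int (-(1 + α)) (by linarith) x ε hε
  have hmeasset : MeasurableSet {y : ℝ | ε < |y - x|} := (aux_isOpen x ε).measurableSet
  refine Integrable.mono' (hker.const_mul (2 * C)) ?_ ?_
  · have hm : Measurable (fun y : ℝ => (f x - f y) / |x - y| ^ (1 + α)) := by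
      have h1 : Continuous (fun y : ℝ => f x - f y) := continuous_const.sub hf
      have h2 : Continuous (fun y : ℝ => |x - y| ^ (1 + α)) :=
        (Real.continuous_rpow_const (by linarith)).comp (continuous_const.sub continuous_id).abs
      exact h1.measurable.div h2.measurable
    exact hm.aestronglyMeasurable.restrict
  · refine (ae_restrict_iff' hmeasset).2 (ae_of_all _ fun y hy => ?_)
    have hy' : ε < |y - x| := hy
    have habs : (0:ℝ) < |x - y| := by
      rw [abs_sub_comm]; linarith
    have hden : (0:ℝ) < |x - y| ^ (1 + α) := Real.rpow_pos_of_pos habs _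
    have hnum : |f x - f y| ≤ 2 * C :=
      (abs_sub _ _).trans (by have := hC x; have := hC y; linarith)
    rw [Real.norm_eq_abs, abs_div, abs_of_pos hden, Real.rpow_neg (abs_nonneg _),
      div_eq_mul_inv]
    have hCnn : (0:ℝ) ≤ (|x - y| ^ (1 + α))⁻¹ := inv_nonneg.2 hden.le
    exact mul_le_mul_of_nonneg_right hnum hCnn

/-- A continuous function bounded by 1 on the nonpositive reals and tending to 0
at infinity is globally bounded. -/
lemma aux_bdd (f : ℝ → ℝ) (hf : Continuous f) (h0 : ∀ x : ℝ, x ≤ 0 → |f x| ≤ 1)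
    (hlim : Tendsto f atTop (𝓝 0)) : ∃ C : ℝ, ∀ y : ℝ, |f y| ≤ C := by
  have h1 : ∀ᶠ x in atTop, |f x| ≤ 1 := by
    have := Metric.tendsto_nhds.mp hlim 1 one_pos
    filter_upwards [this] with x hx
    rw [Real.dist_eq, sub_zero] at hx
    exact hx.le
  obtain ⟨R, hR⟩ := eventually_atTop.1 h1
  obtain ⟨C, hC⟩ := (isCompact_Icc (a := (0:ℝ)) (b := R)).exists_bound_of_continuousOn
    hf.continuousOn
  refine ⟨max C 1, fun y => ?_⟩
  rcases le_or_gt y 0 with h | h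
  · exact (h0 y h).trans (le_max_right _ _)
  rcases le_or_gt y R with h2 | h2
  · exact (hC y ⟨h.le, h2⟩).trans (le_max_left _ _)
  · exact (hR y h2.le).trans (le_max_right _ _)

/-- Comparison principle, subsolution part. -/
theorem stmt2 (α : ℝ) (hα : 0 < α ∧ α < 2) (u V : ℝ → ℝ)
    (hcont : Continuous u)
    (hpos : ∀ x : ℝ, 0 < u x)
    (hbdry : ∀ x : ℝ, x ≤ 0 → u x = 1)
    (heq : ∀ x : ℝ, 0 < x → fracLapPV α u x (-(u x ^ 2 / 2)))
    (hlim : Tendsto u atTop (𝓝 0))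
    (hVcont : Continuous V)
    (hVpos : ∀ x : ℝ, 0 < V x)
    (hVbdry : ∀ x : ℝ, x ≤ 0 → V x ≤ 1)
    (hVsub : ∀ x : ℝ, 0 < x → ∃ L : ℝ, fracLapPV α V x L ∧ L + V x ^ 2 / 2 ≤ 0)
    (hVlim : Tendsto V atTop (𝓝 0)) :
    ∀ x : ℝ, V x ≤ u x := by
  by_contra hcon
  push_neg at hcon
  obtain ⟨x₁, hx₁⟩ := hcon
  set w : ℝ → ℝ := fun y => V y - u y with hw_def
  have hw : Continuous w := hVcont.sub hcont
  have hwlim : Tendsto w atTop (𝓝 0) := by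
    simpa using hVlim.sub hlim
  have hw1 : 0 < w x₁ := sub_pos.2 hx₁
  have hwle : ∀ y : ℝ, y ≤ 0 → w y ≤ 0 := fun y hy =>
    sub_nonpos.2 ((hVbdry y hy).trans_eq (hbdry y hy).symm)
  -- find R beyond which w is small
  have h1 : ∀ᶠ y in atTop, |w y| < w x₁ := by
    have := Metric.tendsto_nhds.mp hwlim (w x₁) hw1
    filter_upwards [this] with y hy
    rwa [Real.dist_eq, sub_zero] at hy
  obtain ⟨R, hR⟩ := eventually_atTop.1 h1
  set R' : ℝ := max R x₁ with hR'_def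
  have hx₁pos : 0 < x₁ := by
    by_contra h
    push_neg at h
    exact absurd (hwle x₁ h) (not_le.2 hw1)
  have hx₁mem : x₁ ∈ Icc (0:ℝ) R' := ⟨hx₁pos.le, le_max_right _ _⟩
  obtain ⟨x₀, hx₀mem, hx₀max⟩ :=
    (isCompact_Icc (a := (0:ℝ)) (b := R')).exists_isMaxOn ⟨x₁, hx₁mem⟩ hw.continuousOn
  have hwx₀ : 0 < w x₀ := hw1.trans_le (hx₀max hx₁mem)
  have hglob : ∀ y : ℝ, w y ≤ w x₀ := by
    intro y
    rcases le_or_gt y 0 with h | h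
    · exact (hwle y h).trans hwx₀.le
    rcases le_or_gt y R' with h2 | h2
    · exact hx₀max ⟨h.le, h2⟩
    · have hyR : R ≤ y := (le_max_left R x₁).trans h2.le
      have := hR y hyR
      have : w y ≤ |w y| := le_abs_self _
      have h3 : w x₁ ≤ w x₀ := hx₀max hx₁mem
      linarith [hR y hyR, le_abs_self (w y)]
  have hx₀pos : 0 < x₀ := by
    by_contra h
    push_neg at h
    exact absurd (hwle x₀ h) (not_le.2 hwx₀)
  -- boundedness
  obtain ⟨Cu, hCu⟩ := aux_bdd u hcont (fun x hx => by rw [hbdry x hx]; norm_num) hlim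
  obtain ⟨CV, hCV⟩ := aux_bdd V hVcont
    (fun x hx => by rw [abs_of_pos (hVpos x)]; exact hVbdry x hx) hVlim
  obtain ⟨L, hL, hLle⟩ := hVsub x₀ hx₀pos
  have hu := heq x₀ hx₀pos
  -- the difference of truncated integrals tends to L + u x₀ ^2 / 2
  have hdiff : Tendsto (fun ε : ℝ =>
      (∫ y in {y : ℝ | ε < |y - x₀|}, (V x₀ - V y) / |x₀ - y| ^ (1 + α)) -
      (∫ y in {y : ℝ | ε < |y - x₀|}, (u x₀ - u y) / |x₀ - y| ^ (1 + α)))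
      (𝓝[>] (0:ℝ)) (𝓝 (L - -(u x₀ ^ 2 / 2))) := hL.sub hu
  have hnonneg : ∀ᶠ ε in 𝓝[>] (0:ℝ), 0 ≤
      (∫ y in {y : ℝ | ε < |y - x₀|}, (V x₀ - V y) / |x₀ - y| ^ (1 + α)) -
      (∫ y in {y : ℝ | ε < |y - x₀|}, (u x₀ - u y) / |x₀ - y| ^ (1 + α)) := by
    filter_upwards [self_mem_nhdsWithin] with ε hε
    have hε' : 0 < ε := hε
    have hVI := aux_integrand_int α hα.1 V hVcont CV hCV x₀ ε hε'
    have huI := aux_integrand_int α hα.1 u hcont Cu hCu x₀ ε hε'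
    rw [← integral_sub hVI huI]
    refine setIntegral_nonneg (aux_isOpen x₀ ε).measurableSet (fun y _ => ?_)
    rw [div_sub_div_same]
    refine div_nonneg ?_ (Real.rpow_nonneg (abs_nonneg _) _)
    have := hglob y
    simp only [hw_def] at this
    linarith
  have hge : 0 ≤ L - -(u x₀ ^ 2 / 2) := ge_of_tendsto hdiff hnonneg
  have hlt : u x₀ < V x₀ := sub_pos.1 hwx₀
  nlinarith [hpos x₀, hVpos x₀]
end

section
/- (Uniform ratio bound.) Let α ∈ (0,2) and let u : ℝ → ℝ be a continuous positive solution of the boundary value problem (-Δ)^{α/2} u(x) + u(x)²/2 = 0 for x > 0, u(x) = 1 for x ≤ 0, which is nonincreasing, satisfies 0 < u(x) ≤ 1 for all x, and satisfies u(x) → 0 as x → ∞. Then for every ε > 0 there exists δ > 0 such that for all x ≥ 1, 1 - ε ≤ u((1+δ)x)/u(x) ≤ 1. -/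
open MeasureTheory Filter Topology Set

namespace Stmt4Aux

lemma region_eq (x ε : ℝ) : {y : ℝ | ε < |y - x|} = Iio (x - ε) ∪ Ioi (x + ε) := by
  ext y
  simp only [mem_setOf_eq, mem_union, mem_Iio, mem_Ioi, lt_abs]
  constructor
  · rintro (h | h)
    · right; linarith
    · left; linarith
  · rintro (h | h)
    · right; linarith
    · left; linarith

lemma region_measurable (x ε : ℝ) : MeasurableSet {y : ℝ | ε < |y - x|} := by
  rw [region_eq]; exact measurableSet_Iio.union measurableSet_Ioi

lemma integrableOn_kernel {α : ℝ} (hα : 0 < α) (x ε : ℝ) (hε : 0 < ε) :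
    IntegrableOn (fun y : ℝ => |x - y| ^ (-(1 + α))) {y : ℝ | ε < |y - x|} := by
  have hexp : (-(1 + α)) < -1 := by linarith
  have base : IntegrableOn (fun t : ℝ => t ^ (-(1 + α))) (Ioi ε) :=
    integrableOn_Ioi_rpow_of_lt hexp hε
  rw [region_eq]
  refine IntegrableOn.union ?_ ?_
  · have h := (Measure.measurePreserving_sub_left (volume : Measure ℝ) x).integrableOn_comp_preimage
      (MeasurableEquiv.subLeft x).measurableEmbedding
      (f := fun t : ℝ => t ^ (-(1 + α))) (s := Ioi ε)
    have h2 := h.mpr base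
    have hpre : (fun t : ℝ => x - t) ⁻¹' (Ioi ε) = Iio (x - ε) := by
      ext t; simp only [mem_preimage, mem_Ioi, mem_Iio]; constructor <;> intro ht <;> linarith
    rw [hpre] at h2
    refine h2.congr_fun (fun y hy => ?_) measurableSet_Iio
    have : (0:ℝ) < x - y := by simp only [mem_Iio] at hy; linarith
    simp only [Function.comp_apply]
    rw [abs_of_pos this]
  · have h := (measurePreserving_sub_right (volume : Measure ℝ) x).integrableOn_comp_preimage
      (MeasurableEquiv.subRight x).measurableEmbedding
      (f := fun t : ℝ => t ^ (-(1 + α))) (s := Ioi ε)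
    have h2 := h.mpr base
    have hpre : (fun t : ℝ => t - x) ⁻¹' (Ioi ε) = Ioi (x + ε) := by
      ext t; simp only [mem_preimage, mem_Ioi]; constructor <;> intro ht <;> linarith
    rw [hpre] at h2
    refine h2.congr_fun (fun y hy => ?_) measurableSet_Ioi
    have : (0:ℝ) < y - x := by simp only [mem_Ioi] at hy; linarith
    simp only [Function.comp_apply]
    rw [abs_sub_comm, abs_of_pos this]

lemma integrable_main {α : ℝ} (hα : 0 < α) {f : ℝ → ℝ} (hf : Continuous f)
    {M : ℝ} (hM : ∀ y, |f y| ≤ M) (c x ε : ℝ) (hε : 0 < ε) :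
    IntegrableOn (fun y : ℝ => (c - f y) / |x - y| ^ (1 + α)) {y : ℝ | ε < |y - x|} := by
  have hS := region_measurable x ε
  have hker := (integrableOn_kernel hα x ε hε).const_mul (|c| + M)
  refine Integrable.mono' hker ?_ ?_
  · have hden : Continuous (fun y : ℝ => |x - y| ^ (1 + α)) :=
      (Real.continuous_rpow_const (by linarith)).comp (continuous_const.sub continuous_id).abs
    exact (((continuous_const.sub hf).measurable).div hden.measurable).aestronglyMeasurable
  · rw [ae_restrict_iff' hS]
    refine Eventually.of_forall (fun y hy => ?_)
    have hxy : (0:ℝ) < |x - y| := by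
      rw [abs_sub_comm]; exact lt_trans hε hy
    have hK : (0:ℝ) < |x - y| ^ (1 + α) := Real.rpow_pos_of_pos hxy _
    rw [Real.norm_eq_abs, abs_div, abs_of_pos hK, Real.rpow_neg (abs_nonneg _)]
    calc |c - f y| / |x - y| ^ (1 + α) ≤ (|c| + M) / |x - y| ^ (1 + α) := by
          apply div_le_div_of_nonneg_right ?_ hK.le |>.trans_eq rfl
          calc |c - f y| ≤ |c| + |f y| := abs_sub _ _
            _ ≤ |c| + M := by linarith [hM y]
      _ = (|c| + M) * (|x - y| ^ (1 + α))⁻¹ := by rw [div_eq_mul_inv]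

lemma scale_integral {α : ℝ} (hα : 0 < α) {u : ℝ → ℝ} (hu : Continuous u)
    {lam x ε : ℝ} (hlam : 0 < lam) (hε : 0 < ε) :
    ∫ y in {y : ℝ | ε < |y - x|}, (u (lam * x) - u (lam * y)) / |x - y| ^ (1 + α)
      = lam ^ α * ∫ z in {z : ℝ | lam * ε < |z - lam * x|},
          (u (lam * x) - u z) / |lam * x - z| ^ (1 + α) := by
  set S : Set ℝ := {y : ℝ | ε < |y - x|} with hSdef
  set S' : Set ℝ := {z : ℝ | lam * ε < |z - lam * x|} with hS'def
  have hS := region_measurable x ε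
  have hS' := region_measurable (lam * x) (lam * ε)
  set g : ℝ → ℝ := fun y => (u (lam * x) - u (lam * y)) / |x - y| ^ (1 + α) with hg
  set F : ℝ → ℝ := fun z => lam ^ (1 + α) * ((u (lam * x) - u z) / |lam * x - z| ^ (1 + α)) with hF
  have hlam1a : (0:ℝ) < lam ^ (1 + α) := Real.rpow_pos_of_pos hlam _
  have key : ∀ y : ℝ, S.indicator g y = S'.indicator F (lam * y) := by
    intro y
    have hmem : y ∈ S ↔ lam * y ∈ S' := by
      simp only [hSdef, hS'def, mem_setOf_eq]
      rw [show lam * y - lam * x = lam * (y - x) by ring, abs_mul, abs_of_pos hlam]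
      exact (mul_lt_mul_iff_right₀ hlam).symm
    by_cases hy : y ∈ S
    · rw [indicator_of_mem hy, indicator_of_mem (hmem.mp hy)]
      have habs : |lam * x - lam * y| = lam * |x - y| := by
        rw [show lam * x - lam * y = lam * (x - y) by ring, abs_mul, abs_of_pos hlam]
      show (u (lam * x) - u (lam * y)) / |x - y| ^ (1 + α)
          = lam ^ (1 + α) * ((u (lam * x) - u (lam * y)) / |lam * x - lam * y| ^ (1 + α))
      rw [habs, Real.mul_rpow hlam.le (abs_nonneg _)]
      have hKne : (lam ^ (1 + α)) ≠ 0 := ne_of_gt hlam1a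
      have hxy : (0:ℝ) < |x - y| := by
        have h' : ε < |y - x| := hy
        rw [abs_sub_comm] at h'
        linarith
      have hne : |x - y| ^ (1 + α) ≠ 0 := ne_of_gt (Real.rpow_pos_of_pos hxy _)
      field_simp
    · rw [indicator_of_notMem hy, indicator_of_notMem (fun hc => hy (hmem.mpr hc))]
  calc ∫ y in S, g y = ∫ y, S.indicator g y := (integral_indicator hS).symm
    _ = ∫ y, S'.indicator F (lam * y) := by congr 1; ext y; exact key y
    _ = |lam⁻¹| • ∫ z, S'.indicator F z := Measure.integral_comp_mul_left (S'.indicator F) lam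
    _ = lam⁻¹ * ∫ z, S'.indicator F z := by rw [abs_of_pos (inv_pos.mpr hlam), smul_eq_mul]
    _ = lam⁻¹ * ∫ z in S', lam ^ (1 + α) * ((u (lam * x) - u z) / |lam * x - z| ^ (1 + α)) := by
        rw [integral_indicator hS']
    _ = lam⁻¹ * (lam ^ (1 + α) * ∫ z in S', (u (lam * x) - u z) / |lam * x - z| ^ (1 + α)) := by
        rw [integral_const_mul]
    _ = lam ^ α * ∫ z in S', (u (lam * x) - u z) / |lam * x - z| ^ (1 + α) := by
        rw [← mul_assoc]
        congr 1
        rw [Real.rpow_add hlam, Real.rpow_one, ← mul_assoc, inv_mul_cancel₀ (ne_of_gt hlam)]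
        ring

lemma comparison {α : ℝ} (hα : 0 < α) {u : ℝ → ℝ}
    (hcont : Continuous u)
    (hpos : ∀ x : ℝ, 0 < u x)
    (hbdry : ∀ x : ℝ, x ≤ 0 → u x = 1)
    (heq : ∀ x : ℝ, 0 < x → fracLapPV α u x (-(u x ^ 2 / 2)))
    (hle1 : ∀ x : ℝ, u x ≤ 1)
    (hlim : Tendsto u atTop (𝓝 0))
    {lam : ℝ} (hlam : 1 < lam) :
    ∀ x : ℝ, u x ≤ lam ^ α * u (lam * x) := by
  have hlam0 : (0:ℝ) < lam := by linarith
  set A := lam ^ α with hA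
  have hA1 : 1 < A := Real.one_lt_rpow_iff_of_pos hlam0 |>.mpr (Or.inl ⟨hlam, hα⟩)
  have hA0 : 0 < A := by linarith
  set d : ℝ → ℝ := fun x => A * u (lam * x) - u x with hd
  by_contra hcon
  push_neg at hcon
  obtain ⟨x₁, hx₁⟩ := hcon
  have hdneg : d x₁ < 0 := by simp only [hd]; linarith
  have hdcont : Continuous d :=
    (continuous_const.mul (hcont.comp (continuous_const.mul continuous_id))).sub hcont
  have hd0 : ∀ x : ℝ, x ≤ 0 → d x = A - 1 := by
    intro x hx
    have h1 : lam * x ≤ 0 := mul_nonpos_iff.mpr (Or.inl ⟨hlam0.le, hx⟩)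
    simp only [hd, hbdry _ h1, hbdry _ hx, mul_one]
  have hx₁pos : 0 < x₁ := by
    by_contra h
    push_neg at h
    rw [hd0 x₁ h] at hdneg
    linarith
  -- d tends to 0 at infinity
  have hdlim : Tendsto d atTop (𝓝 0) := by
    have h1 : Tendsto (fun x : ℝ => lam * x) atTop atTop :=
      Tendsto.const_mul_atTop hlam0 tendsto_id
    have h2 : Tendsto (fun x : ℝ => u (lam * x)) atTop (𝓝 0) := hlim.comp h1
    have h3 : Tendsto (fun x : ℝ => A * u (lam * x) - u x) atTop (𝓝 (A * 0 - 0)) :=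
      (tendsto_const_nhds.mul h2).sub hlim
    simpa using h3
  obtain ⟨R, hR⟩ := eventually_atTop.mp (hdlim.eventually (eventually_gt_nhds hdneg))
  set R' := max R x₁ with hR'
  have hR'0 : (0:ℝ) ≤ R' := le_trans hx₁pos.le (le_max_right R x₁)
  obtain ⟨x₀, hx₀mem, hx₀min⟩ :=
    isCompact_Icc.exists_isMinOn (s := Icc 0 R') ⟨0, mem_Icc.mpr ⟨le_refl 0, hR'0⟩⟩
      hdcont.continuousOn
  have hx₀x₁ : d x₀ ≤ d x₁ :=
    hx₀min (mem_Icc.mpr ⟨hx₁pos.le, le_max_right R x₁⟩)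
  have hx₀neg : d x₀ < 0 := lt_of_le_of_lt hx₀x₁ hdneg
  have hx₀pos : 0 < x₀ := by
    rcases lt_or_ge 0 x₀ with h | h
    · exact h
    · rw [hd0 x₀ h] at hx₀neg; linarith
  -- global minimum
  have hglob : ∀ y : ℝ, d x₀ ≤ d y := by
    intro y
    rcases le_or_gt y 0 with h | h
    · rw [hd0 y h]; linarith
    · rcases le_or_gt y R' with h2 | h2
      · exact hx₀min (mem_Icc.mpr ⟨h.le, h2⟩)
      · have : R ≤ y := le_trans (le_max_left R x₁) h2.le
        exact le_trans hx₀x₁ (hR y this).le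
  -- limits of the truncated integrals
  have hlx₀ : 0 < lam * x₀ := mul_pos hlam0 hx₀pos
  have hu1 : ∀ y : ℝ, |u y| ≤ 1 := fun y => abs_le.mpr ⟨by linarith [hpos y], hle1 y⟩
  have h1 := heq x₀ hx₀pos
  have h2 := heq (lam * x₀) hlx₀
  rw [fracLapPV] at h1 h2
  -- the PV integral of d at x₀
  set Fd : ℝ → ℝ := fun ε =>
    ∫ y in {y : ℝ | ε < |y - x₀|}, (d x₀ - d y) / |x₀ - y| ^ (1 + α) with hFd
  have hmul : Tendsto (fun ε : ℝ => lam * ε) (𝓝[>] (0:ℝ)) (𝓝[>] (0:ℝ)) := by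
    apply tendsto_nhdsWithin_of_tendsto_nhds_of_eventually_within
    · have : Tendsto (fun ε : ℝ => lam * ε) (𝓝 (0:ℝ)) (𝓝 (lam * 0)) :=
        (continuous_const.mul continuous_id).tendsto 0
      rw [mul_zero] at this
      exact this.mono_left nhdsWithin_le_nhds
    · exact eventually_nhdsWithin_of_forall fun ε hε => mul_pos hlam0 hε
  have hF2 : Tendsto (fun ε : ℝ => A * (A *
      (∫ z in {z : ℝ | lam * ε < |z - lam * x₀|},
        (u (lam * x₀) - u z) / |lam * x₀ - z| ^ (1 + α))))
      (𝓝[>] (0:ℝ)) (𝓝 (A * (A * -(u (lam * x₀) ^ 2 / 2)))) :=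
    tendsto_const_nhds.mul (tendsto_const_nhds.mul (h2.comp hmul))
  have hFdlim : Tendsto Fd (𝓝[>] (0:ℝ))
      (𝓝 (A * (A * -(u (lam * x₀) ^ 2 / 2)) - -(u x₀ ^ 2 / 2))) := by
    apply Tendsto.congr' _ (hF2.sub h1)
    filter_upwards [self_mem_nhdsWithin] with ε (hε : (0:ℝ) < ε)
    have hIu : IntegrableOn (fun y : ℝ => (u x₀ - u y) / |x₀ - y| ^ (1 + α))
        {y : ℝ | ε < |y - x₀|} := integrable_main hα hcont hu1 (u x₀) x₀ ε hε
    have hfv : Continuous fun y : ℝ => A * u (lam * y) :=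
      continuous_const.mul (hcont.comp (continuous_const.mul continuous_id))
    have hMv : ∀ y : ℝ, |A * u (lam * y)| ≤ A := by
      intro y
      rw [abs_mul, abs_of_pos hA0]
      calc A * |u (lam * y)| ≤ A * 1 := mul_le_mul_of_nonneg_left (hu1 _) hA0.le
        _ = A := mul_one A
    have hIv : IntegrableOn
        (fun y : ℝ => (A * u (lam * x₀) - A * u (lam * y)) / |x₀ - y| ^ (1 + α))
        {y : ℝ | ε < |y - x₀|} := integrable_main hα hfv hMv (A * u (lam * x₀)) x₀ ε hε
    -- rewrite the v-part using scaling
    have hval : (fun y : ℝ => (A * u (lam * x₀) - A * u (lam * y)) / |x₀ - y| ^ (1 + α))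
        = fun y : ℝ => A * ((u (lam * x₀) - u (lam * y)) / |x₀ - y| ^ (1 + α)) := by
      funext y; rw [← mul_sub, mul_div_assoc]
    have hsplit : Fd ε = (∫ y in {y : ℝ | ε < |y - x₀|},
          (A * u (lam * x₀) - A * u (lam * y)) / |x₀ - y| ^ (1 + α))
        - ∫ y in {y : ℝ | ε < |y - x₀|}, (u x₀ - u y) / |x₀ - y| ^ (1 + α) := by
      rw [hFd, ← integral_sub hIv hIu]
      apply setIntegral_congr_fun (region_measurable x₀ ε)
      intro y _
      simp only [hd]
      rw [← sub_div]
      congr 1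
      ring
    rw [hsplit, hval]
    rw [integral_const_mul, scale_integral hα hcont hlam0 hε, hA]
  -- Fd is nonpositive
  have hFdnonpos : ∀ ε : ℝ, Fd ε ≤ 0 := by
    intro ε
    apply setIntegral_nonpos (region_measurable x₀ ε)
    intro y _
    apply div_nonpos_of_nonpos_of_nonneg
    · linarith [hglob y]
    · exact Real.rpow_nonneg (abs_nonneg _) _
  have hL : A * (A * -(u (lam * x₀) ^ 2 / 2)) - -(u x₀ ^ 2 / 2) ≤ 0 :=
    le_of_tendsto hFdlim (Eventually.of_forall hFdnonpos)
  have hBv : A * u (lam * x₀) < u x₀ := by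
    have := hx₀neg; simp only [hd] at this; linarith
  have hB0 : 0 < A * u (lam * x₀) := mul_pos hA0 (hpos _)
  nlinarith [sq_nonneg (u x₀), sq_nonneg (A * u (lam * x₀))]

end Stmt4Aux

/-- Uniform ratio bound. -/
theorem stmt4 (α : ℝ) (hα : 0 < α ∧ α < 2) (u : ℝ → ℝ)
    (hcont : Continuous u)
    (hpos : ∀ x : ℝ, 0 < u x)
    (hbdry : ∀ x : ℝ, x ≤ 0 → u x = 1)
    (heq : ∀ x : ℝ, 0 < x → fracLapPV α u x (-(u x ^ 2 / 2)))
    (hmono : ∀ x y : ℝ, x ≤ y → u y ≤ u x)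
    (hle1 : ∀ x : ℝ, u x ≤ 1)
    (hlim : Tendsto u atTop (𝓝 0)) :
    ∀ ε : ℝ, 0 < ε → ∃ δ : ℝ, 0 < δ ∧
      ∀ x : ℝ, 1 ≤ x →
        1 - ε ≤ u ((1 + δ) * x) / u x ∧ u ((1 + δ) * x) / u x ≤ 1 := by
  obtain ⟨hα0, -⟩ := hα
  intro ε hε
  set ε' := min ε (1/2) with hε'def
  have hε'pos : 0 < ε' := lt_min hε (by norm_num)
  have hε'lt1 : ε' < 1 := lt_of_le_of_lt (min_le_right _ _) (by norm_num)
  have hε'le : ε' ≤ ε := min_le_left _ _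
  have h1ε' : 0 < 1 - ε' := by linarith
  set lam := (1 - ε') ^ (-α⁻¹ : ℝ) with hlamdef
  have hlam1 : 1 < lam := by
    rw [hlamdef]
    exact Real.one_lt_rpow_iff_of_pos h1ε' |>.mpr
      (Or.inr ⟨by linarith, neg_lt_zero.mpr (inv_pos.mpr hα0)⟩)
  have hApow : lam ^ α = (1 - ε')⁻¹ := by
    rw [hlamdef, ← Real.rpow_mul h1ε'.le, show (-α⁻¹) * α = -1 by
      field_simp, Real.rpow_neg_one]
  refine ⟨lam - 1, by linarith, ?_⟩
  intro x hx
  have hxpos : (0:ℝ) < x := lt_of_lt_of_le one_pos hx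
  have hkey := Stmt4Aux.comparison hα0 hcont hpos hbdry heq hle1 hlim hlam1 x
  rw [hApow] at hkey
  have h1 : (1 - ε') * u x ≤ u (lam * x) := by
    calc (1 - ε') * u x ≤ (1 - ε') * ((1 - ε')⁻¹ * u (lam * x)) :=
          mul_le_mul_of_nonneg_left hkey h1ε'.le
      _ = u (lam * x) := by field_simp
  have hsub : 1 + (lam - 1) = lam := by ring
  rw [hsub]
  constructor
  · rw [le_div_iff₀ (hpos x)]
    nlinarith [hpos x]
  · rw [div_le_one (hpos x)]
    exact hmono x (lam * x) (by nlinarith)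
end

section
/- (Uniqueness of solutions of the boundary value problem.) Let α ∈ (0,2). If u and v are both continuous positive solutions of the boundary value problem (-Δ)^{α/2} u(x) + u(x)²/2 = 0 for x > 0, u(x) = 1 for x ≤ 0, and both satisfy u(x) → 0 and v(x) → 0 as x → ∞, then u(x) = v(x) for all x ∈ ℝ. -/
open MeasureTheory Filter Topology Set

private lemma kernelInt {α ε : ℝ} (hα : 0 < α) (hε : 0 < ε) (x₀ : ℝ) :
    IntegrableOn (fun y : ℝ => |x₀ - y| ^ (-(1 + α))) {y : ℝ | ε < |y - x₀|} := by
  have hbase : IntegrableOn (fun t : ℝ => t ^ (-(1 + α))) (Ioi ε) :=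
    integrableOn_Ioi_rpow_of_lt (by linarith) hε
  have hind : Integrable ((Ioi ε).indicator (fun t : ℝ => t ^ (-(1 + α)))) :=
    (integrable_indicator_iff measurableSet_Ioi).mpr hbase
  have hset : {y : ℝ | ε < |y - x₀|} = Iio (x₀ - ε) ∪ Ioi (x₀ + ε) := by
    ext y
    simp only [mem_setOf_eq, mem_union, mem_Iio, mem_Ioi, lt_abs]
    constructor
    · rintro (h | h)
      · right; linarith
      · left; linarith
    · rintro (h | h)
      · right; linarith
      · left; linarith
  rw [hset]
  apply IntegrableOn.union
  · have h1 : Integrable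
        (fun y : ℝ => (Ioi ε).indicator (fun t : ℝ => t ^ (-(1 + α))) (x₀ - y)) := by
      have := (hind.comp_neg).comp_sub_right x₀
      simpa [neg_sub] using this
    refine (integrable_indicator_iff measurableSet_Iio).mp ?_
    have heq : (Iio (x₀ - ε)).indicator (fun y : ℝ => |x₀ - y| ^ (-(1 + α)))
        = fun y : ℝ => (Ioi ε).indicator (fun t : ℝ => t ^ (-(1 + α))) (x₀ - y) := by
      funext y
      by_cases h : y < x₀ - ε
      · rw [indicator_of_mem (by simpa [mem_Iio] using h),
          indicator_of_mem (by simp only [mem_Ioi]; linarith)]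
        rw [abs_of_pos (by linarith)]
      · rw [indicator_of_notMem (by simpa [mem_Iio] using h),
          indicator_of_notMem (by simp only [mem_Ioi]; intro hc; exact h (by linarith))]
    rw [heq]
    exact h1
  · have h1 : Integrable
        (fun y : ℝ => (Ioi ε).indicator (fun t : ℝ => t ^ (-(1 + α))) (y - x₀)) :=
      hind.comp_sub_right x₀
    refine (integrable_indicator_iff measurableSet_Ioi).mp ?_
    have heq : (Ioi (x₀ + ε)).indicator (fun y : ℝ => |x₀ - y| ^ (-(1 + α)))
        = fun y : ℝ => (Ioi ε).indicator (fun t : ℝ => t ^ (-(1 + α))) (y - x₀) := by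
      funext y
      by_cases h : x₀ + ε < y
      · rw [indicator_of_mem (by simpa [mem_Ioi] using h),
          indicator_of_mem (by simp only [mem_Ioi]; linarith)]
        rw [abs_of_neg (by linarith), neg_sub]
      · rw [indicator_of_notMem (by simpa [mem_Ioi] using h),
          indicator_of_notMem (by simp only [mem_Ioi]; intro hc; exact h (by linarith))]
    rw [heq]
    exact h1

private lemma boundedOf {u : ℝ → ℝ} (hc : Continuous u)
    (hb : ∀ x : ℝ, x ≤ 0 → u x = 1) (hl : Tendsto u atTop (𝓝 0)) :
    ∃ C : ℝ, ∀ x, |u x| ≤ C := by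
  have habs : Tendsto (fun x => |u x|) atTop (𝓝 0) := by simpa using hl.abs
  have h1 : ∀ᶠ x in atTop, |u x| ≤ 1 :=
    habs.eventually_le_const (by norm_num)
  obtain ⟨M, hM⟩ := eventually_atTop.mp h1
  set M' := max M 0 with hM'
  obtain ⟨C, hC⟩ := (isCompact_Icc (a := (0:ℝ)) (b := M')).exists_bound_of_continuousOn
    hc.continuousOn
  refine ⟨max C 1, fun x => ?_⟩
  rcases le_or_gt x 0 with h | h
  · rw [hb x h]; simp
  · rcases le_or_gt x M' with h2 | h2
    · exact le_trans (by simpa [Real.norm_eq_abs] using hC x ⟨h.le, h2⟩) (le_max_left _ _)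
    · exact le_trans (hM x (le_trans (le_max_left _ _) h2.le)) (le_max_right _ _)

private lemma integrandInt {α ε : ℝ} (hα : 0 < α) (hε : 0 < ε) (x₀ : ℝ)
    {f : ℝ → ℝ} (hf : Continuous f) {C : ℝ} (hC : ∀ x, |f x| ≤ C) :
    IntegrableOn (fun y : ℝ => (f x₀ - f y) / |x₀ - y| ^ (1 + α))
      {y : ℝ | ε < |y - x₀|} := by
  have hker := (kernelInt hα hε x₀).const_mul (2 * C)
  have hmeas : MeasurableSet {y : ℝ | ε < |y - x₀|} :=
    measurableSet_lt measurable_const ((measurable_id.sub_const x₀).abs)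
  refine hker.mono' ?_ ?_
  · refine ContinuousOn.aestronglyMeasurable ?_ hmeas
    intro y hy
    have hdist : (0:ℝ) < |x₀ - y| := by
      rw [abs_sub_comm]; exact lt_trans hε hy
    exact ((continuous_const.sub hf).continuousAt.div
      ((((continuous_const.sub continuous_id).abs).continuousAt).rpow_const
        (Or.inl hdist.ne')) (Real.rpow_pos_of_pos hdist _).ne').continuousWithinAt
  · rw [ae_restrict_iff' hmeas]
    refine ae_of_all _ fun y hy => ?_
    have hdist : (0:ℝ) < |x₀ - y| := by
      rw [abs_sub_comm]; exact lt_trans hε hy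
    have hkpos : (0:ℝ) < |x₀ - y| ^ (1 + α) := Real.rpow_pos_of_pos hdist _
    rw [Real.norm_eq_abs, abs_div, abs_of_pos hkpos,
      Real.rpow_neg (abs_nonneg _), ← div_eq_mul_inv]
    have hnum : |f x₀ - f y| ≤ 2 * C := by
      have h1 := abs_le.mp (hC x₀)
      have h2 := abs_le.mp (hC y)
      rw [abs_le]
      constructor <;> linarith [h1.1, h1.2, h2.1, h2.2]
    gcongr

private lemma keyLe (α : ℝ) (hα : 0 < α ∧ α < 2) (u v : ℝ → ℝ)
    (hucont : Continuous u)
    (hupos : ∀ x : ℝ, 0 < u x)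
    (hubdry : ∀ x : ℝ, x ≤ 0 → u x = 1)
    (hueq : ∀ x : ℝ, 0 < x → fracLapPV α u x (-(u x ^ 2 / 2)))
    (hulim : Tendsto u atTop (𝓝 0))
    (hvcont : Continuous v)
    (hvpos : ∀ x : ℝ, 0 < v x)
    (hvbdry : ∀ x : ℝ, x ≤ 0 → v x = 1)
    (hveq : ∀ x : ℝ, 0 < x → fracLapPV α v x (-(v x ^ 2 / 2)))
    (hvlim : Tendsto v atTop (𝓝 0)) :
    ∀ x : ℝ, u x ≤ v x := by
  by_contra hcon
  push_neg at hcon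
  obtain ⟨x₁, hx₁⟩ := hcon
  set w := fun x => u x - v x with hw
  have hwcont : Continuous w := hucont.sub hvcont
  have hwlim : Tendsto w atTop (𝓝 0) := by simpa using hulim.sub hvlim
  have hwzero : ∀ x : ℝ, x ≤ 0 → w x = 0 := fun x hx => by
    simp [hw, hubdry x hx, hvbdry x hx]
  have hx₁pos : 0 < w x₁ := sub_pos.mpr hx₁
  have h1 : ∀ᶠ x in atTop, w x < w x₁ := hwlim.eventually_lt_const hx₁pos
  obtain ⟨M, hM⟩ := eventually_atTop.mp h1
  have hx₁gt : 0 < x₁ := by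
    by_contra h
    push_neg at h
    rw [hwzero x₁ h] at hx₁pos
    exact lt_irrefl _ hx₁pos
  set M' := max M x₁ with hM'
  have hx₁mem : x₁ ∈ Icc (0:ℝ) M' := ⟨hx₁gt.le, le_max_right _ _⟩
  obtain ⟨x₀, hx₀mem, hx₀max⟩ :=
    (isCompact_Icc (a := (0:ℝ)) (b := M')).exists_isMaxOn ⟨x₁, hx₁mem⟩ hwcont.continuousOn
  have hx₀ge : w x₁ ≤ w x₀ := hx₀max hx₁mem
  have hwx₀pos : 0 < w x₀ := lt_of_lt_of_le hx₁pos hx₀ge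
  have hmaxAll : ∀ y : ℝ, w y ≤ w x₀ := by
    intro y
    rcases le_or_gt y 0 with h | h
    · rw [hwzero y h]; exact hwx₀pos.le
    · rcases le_or_gt y M' with h2 | h2
      · exact hx₀max ⟨h.le, h2⟩
      · exact le_trans (hM y (le_trans (le_max_left _ _) h2.le)).le hx₀ge
  have hx₀pos : 0 < x₀ := by
    by_contra h
    push_neg at h
    rw [hwzero x₀ h] at hwx₀pos
    exact lt_irrefl _ hwx₀pos
  obtain ⟨Cu, hCu⟩ := boundedOf hucont hubdry hulim
  obtain ⟨Cv, hCv⟩ := boundedOf hvcont hvbdry hvlim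
  have hu0 := hueq x₀ hx₀pos
  have hv0 := hveq x₀ hx₀pos
  have hle : -(v x₀ ^ 2 / 2) ≤ -(u x₀ ^ 2 / 2) := by
    refine le_of_tendsto_of_tendsto hv0 hu0 ?_
    filter_upwards [self_mem_nhdsWithin] with ε hε
    have hεpos : (0:ℝ) < ε := hε
    refine setIntegral_mono_on
      (integrandInt hα.1 hεpos x₀ hvcont hCv)
      (integrandInt hα.1 hεpos x₀ hucont hCu)
      (measurableSet_lt measurable_const ((measurable_id.sub_const x₀).abs))
      fun y hy => ?_
    have hdist : (0:ℝ) < |x₀ - y| := by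
      rw [abs_sub_comm]; exact lt_trans hεpos hy
    have hkpos : (0:ℝ) < |x₀ - y| ^ (1 + α) := Real.rpow_pos_of_pos hdist _
    have hmy : u y - v y ≤ u x₀ - v x₀ := hmaxAll y
    rw [div_le_div_iff_of_pos_right hkpos]
    linarith
  have hux := hupos x₀
  have hvx := hvpos x₀
  have huv : v x₀ < u x₀ := sub_pos.mp hwx₀pos
  nlinarith

/-- Uniqueness of solutions of the boundary value problem. -/
theorem stmt5 (α : ℝ) (hα : 0 < α ∧ α < 2) (u v : ℝ → ℝ)
    (hucont : Continuous u)
    (hupos : ∀ x : ℝ, 0 < u x)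
    (hubdry : ∀ x : ℝ, x ≤ 0 → u x = 1)
    (hueq : ∀ x : ℝ, 0 < x → fracLapPV α u x (-(u x ^ 2 / 2)))
    (hulim : Tendsto u atTop (𝓝 0))
    (hvcont : Continuous v)
    (hvpos : ∀ x : ℝ, 0 < v x)
    (hvbdry : ∀ x : ℝ, x ≤ 0 → v x = 1)
    (hveq : ∀ x : ℝ, 0 < x → fracLapPV α v x (-(v x ^ 2 / 2)))
    (hvlim : Tendsto v atTop (𝓝 0)) :
    ∀ x : ℝ, u x = v x := by
  intro x
  exact le_antisymm
    (keyLe α hα u v hucont hupos hubdry hueq hulim hvcont hvpos hvbdry hveq hvlim x)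
    (keyLe α hα v u hvcont hvpos hvbdry hveq hvlim hucont hupos hubdry hueq hulim x)
end

section
/- (Scaling of the auxiliary singular integral.) Let α ∈ (0,2). For x > 0 define F(x) as the principal value F(x) := lim_{ε→0⁺} ∫_{{y ∈ (0,∞) : |y-x| > ε}} (x^{-α/2} - y^{-α/2})/|x-y|^{1+α} dy. Then for every x > 0 this limit exists and is finite, and the scaling identity F(λx) = λ^{-3α/2} F(x) holds for all λ > 0 and all x > 0. Consequently F(x) = F(1) · x^{-3α/2} for all x > 0. -/
open MeasureTheory Filter Topology Set
open scoped Pointwise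

/-!
Substituting `y = λ z` maps the truncation domain for `(x, ε)` onto the one for `(λ x, λ ε)` and
multiplies the integrand by `λ ^ (-α/2 - (1 + α))`; with the Jacobian `λ`, every truncated integral,
hence the principal value, scales by `λ ^ (-3α/2)`.

For existence, fix `δ = x/2`. Outside `|y - x| ≤ δ` the integrand is integrable (it behaves like
`y ^ (-α/2)` near `0` and like `y ^ (-1-α)` at infinity). Inside, pairing `x + t` with `x - t`
turns the integrand into minus the second difference of `y ↦ y ^ (-α/2)` at `x`, divided by
`t ^ (1 + α)`; the second difference is `O(t ^ 2)`, so the paired integrand is `O(t ^ (1 - α))`,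
integrable at `0` because `α < 2`, and the truncated integrals converge as `ε → 0⁺`.
-/

/-- The principal value
`F(x) = lim_{ε→0⁺} ∫_{{y ∈ (0,∞) : |y-x| > ε}} (x^{-α/2} - y^{-α/2})/|x-y|^{1+α} dy`
exists and equals `L`. -/
def auxFPV (α x L : ℝ) : Prop :=
  Tendsto (fun ε : ℝ =>
      ∫ y in {y : ℝ | 0 < y ∧ ε < |y - x|},
        (x ^ (-(α / 2)) - y ^ (-(α / 2))) / |x - y| ^ (1 + α))
    (𝓝[>] (0 : ℝ)) (𝓝 L)

noncomputable def auxIntegrand (α x y : ℝ) : ℝ :=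
  (x ^ (-(α / 2)) - y ^ (-(α / 2))) / |x - y| ^ (1 + α)

noncomputable def auxTrunc (α x ε : ℝ) : ℝ :=
  ∫ y in {y : ℝ | 0 < y ∧ ε < |y - x|}, auxIntegrand α x y

theorem auxFPV_iff {α x L : ℝ} :
    auxFPV α x L ↔ Tendsto (auxTrunc α x) (𝓝[>] 0) (𝓝 L) :=
  Iff.rfl

theorem measurable_auxIntegrand (α x : ℝ) : Measurable (auxIntegrand α x) := by
  unfold auxIntegrand; fun_prop

theorem auxIntegrand_mul_mul (α : ℝ) {c x y : ℝ} (hc : 0 < c) (hx : 0 ≤ x) (hy : 0 ≤ y) :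
    auxIntegrand α (c * x) (c * y) = c ^ (-(α / 2) - (1 + α)) * auxIntegrand α x y := by
  have hxy : |c * x - c * y| = c * |x - y| := by
    rw [← mul_sub, abs_mul, abs_of_pos hc]
  rw [auxIntegrand, auxIntegrand, Real.mul_rpow hc.le hx, Real.mul_rpow hc.le hy, hxy,
    Real.mul_rpow hc.le (abs_nonneg _), ← mul_sub, mul_div_mul_comm, Real.rpow_sub hc]

theorem smul_setOf_lt_abs_sub {c : ℝ} (hc : 0 < c) (x ε : ℝ) :
    c • {y : ℝ | 0 < y ∧ ε < |y - x|} = {y : ℝ | 0 < y ∧ c * ε < |y - c * x|} := by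
  ext y
  have hy : |c⁻¹ * y - x| = c⁻¹ * |y - c * x| := by
    rw [← abs_of_pos (inv_pos.2 hc), ← abs_mul, abs_of_pos (inv_pos.2 hc), mul_sub,
      inv_mul_cancel_left₀ hc.ne']
  rw [mem_smul_set_iff_inv_smul_mem₀ hc.ne', smul_eq_mul]
  simp only [mem_ofPred_eq, hy, mul_pos_iff_of_pos_left (inv_pos.2 hc),
    lt_inv_mul_iff₀ hc]

theorem auxTrunc_mul_mul (α : ℝ) {c x : ℝ} (hc : 0 < c) (hx : 0 ≤ x) (ε : ℝ) :
    auxTrunc α (c * x) (c * ε) = c ^ (-(3 * α / 2)) * auxTrunc α x ε := by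
  have hS : MeasurableSet {y : ℝ | 0 < y ∧ ε < |y - x|} :=
    measurableSet_Ioi.inter (measurableSet_lt measurable_const (measurable_id.sub_const x).abs)
  have h := Measure.setIntegral_comp_smul_of_pos volume (auxIntegrand α (c * x))
    {y : ℝ | 0 < y ∧ ε < |y - x|} hc
  simp only [smul_eq_mul, Module.finrank_self, pow_one, smul_setOf_lt_abs_sub hc] at h
  calc auxTrunc α (c * x) (c * ε)
      = c * ∫ z in {y : ℝ | 0 < y ∧ ε < |y - x|}, auxIntegrand α (c * x) (c * z) := by
        rw [h, mul_inv_cancel_left₀ hc.ne', auxTrunc]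
    _ = c * (c ^ (-(α / 2) - (1 + α)) * auxTrunc α x ε) := by
        rw [setIntegral_congr_fun hS fun z hz => auxIntegrand_mul_mul α hc hx hz.1.le,
          integral_const_mul, auxTrunc]
    _ = c ^ (-(3 * α / 2)) * auxTrunc α x ε := by
        rw [← mul_assoc, show -(3 * α / 2) = 1 + (-(α / 2) - (1 + α)) by ring,
          Real.rpow_add hc, Real.rpow_one]

theorem auxFPV_mul {α c x L : ℝ} (hc : 0 < c) (hx : 0 ≤ x) (hL : auxFPV α x L) :
    auxFPV α (c * x) (c ^ (-(3 * α / 2)) * L) := by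
  have hrange : range (c * ·) ∈ 𝓝[>] (0 : ℝ) := by
    rw [(mul_left_surjective₀ hc.ne').range_eq]
    exact univ_mem
  rw [auxFPV_iff, ← tendsto_comap'_iff hrange, comap_mulLeft_nhdsGT_zero hc]
  simpa only [Function.comp_def, auxTrunc_mul_mul α hc hx] using
    (auxFPV_iff.1 hL).const_mul (c ^ (-(3 * α / 2)))

theorem abs_rpow_sub_rpow_le_of_nonpos {p a b : ℝ} (hp : p ≤ 0) (ha : 0 < a) (hab : a ≤ b) :
    |b ^ p - a ^ p| ≤ a ^ p := by
  have h : b ^ p ≤ a ^ p := Real.rpow_le_rpow_of_nonpos ha hab hp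
  rw [abs_of_nonpos (by linarith)]
  linarith [Real.rpow_nonneg (ha.le.trans hab) p]

theorem integrableOn_auxIntegrand_Ioo {α x ε : ℝ} (hα₀ : 0 ≤ α) (hα₂ : α < 2) (hε : 0 < ε) :
    IntegrableOn (auxIntegrand α x) (Ioo 0 (x - ε)) := by
  have hdom : IntegrableOn (fun y => y ^ (-(α / 2)) / ε ^ (1 + α)) (Ioo 0 (x - ε)) :=
    ((intervalIntegral.intervalIntegrable_rpow' (a := 0) (b := x - ε)
      (by linarith : -1 < -(α / 2))).1.mono_set Ioo_subset_Ioc_self).div_const _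
  refine hdom.mono' (measurable_auxIntegrand α x).aestronglyMeasurable.restrict
    ((ae_restrict_iff' measurableSet_Ioo).2 (Eventually.of_forall fun y hy => ?_))
  have hxy : ε ≤ |x - y| := by rw [abs_of_pos (by linarith [hy.2])]; linarith [hy.2]
  rw [Real.norm_eq_abs, auxIntegrand, abs_div, abs_of_nonneg (Real.rpow_nonneg (abs_nonneg _) _)]
  gcongr
  · exact Real.rpow_nonneg hy.1.le _
  · refine abs_rpow_sub_rpow_le_of_nonpos ?_ hy.1 ?_ <;> linarith [hy.2]

theorem integrableOn_auxIntegrand_Ioi {α x ε : ℝ} (hα : 0 < α) (hx : 0 < x) (hε : 0 < ε) :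
    IntegrableOn (auxIntegrand α x) (Ioi (x + ε)) := by
  set C := x ^ (-(α / 2)) / (ε / (x + ε)) ^ (1 + α)
  have hdom : IntegrableOn (fun y => C * y ^ (-(1 + α))) (Ioi (x + ε)) :=
    (integrableOn_Ioi_rpow_of_lt (by linarith) (by linarith)).const_mul _
  refine hdom.mono' (measurable_auxIntegrand α x).aestronglyMeasurable.restrict
    ((ae_restrict_iff' measurableSet_Ioi).2 (Eventually.of_forall fun y (hy : x + ε < y) => ?_))
  have hy0 : 0 < y := by linarith
  have hxy : ε / (x + ε) * y ≤ |x - y| := by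
    rw [abs_of_neg (by linarith), div_mul_eq_mul_div, div_le_iff₀ (by linarith)]
    nlinarith
  calc ‖auxIntegrand α x y‖
      ≤ x ^ (-(α / 2)) / (ε / (x + ε) * y) ^ (1 + α) := by
        rw [Real.norm_eq_abs, auxIntegrand, abs_div,
          abs_of_nonneg (Real.rpow_nonneg (abs_nonneg _) _), abs_sub_comm]
        gcongr
        exact abs_rpow_sub_rpow_le_of_nonpos (by linarith) hx (by linarith)
    _ = C * y ^ (-(1 + α)) := by
        rw [Real.mul_rpow (by positivity) hy0.le, Real.rpow_neg hy0.le, div_mul_eq_div_div,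
          div_eq_mul_inv _ (y ^ (1 + α))]

theorem setOf_lt_abs_sub_eq_Ioo_union_Ioi {x ε : ℝ} (h : 0 ≤ x + ε) :
    {y : ℝ | 0 < y ∧ ε < |y - x|} = Ioo 0 (x - ε) ∪ Ioi (x + ε) := by
  ext y
  simp only [mem_ofPred_eq, lt_abs, mem_union, mem_Ioo, mem_Ioi]
  constructor
  · rintro ⟨hy, h' | h'⟩
    · exact Or.inr (by linarith)
    · exact Or.inl ⟨hy, by linarith⟩
  · rintro (⟨hy, h'⟩ | h')
    · exact ⟨hy, Or.inr (by linarith)⟩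
    · exact ⟨by linarith, Or.inl (by linarith)⟩

theorem auxTrunc_eq {α x ε : ℝ} (hα₀ : 0 < α) (hα₂ : α < 2) (hx : 0 < x) (hε : 0 < ε)
    (hεx : ε ≤ x) :
    auxTrunc α x ε
      = (∫ y in 0..x - ε, auxIntegrand α x y) + ∫ y in Ioi (x + ε), auxIntegrand α x y := by
  have hdisj : Disjoint (Ioo 0 (x - ε)) (Ioi (x + ε)) :=
    Set.disjoint_left.2 fun y h₁ (h₂ : x + ε < y) => by linarith [h₁.2]
  rw [auxTrunc, setOf_lt_abs_sub_eq_Ioo_union_Ioi (by linarith),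
    setIntegral_union hdisj measurableSet_Ioi (integrableOn_auxIntegrand_Ioo hα₀.le hα₂ hε)
      (integrableOn_auxIntegrand_Ioi hα₀ hx hε),
    intervalIntegral.integral_of_le (by linarith), integral_Ioc_eq_integral_Ioo]

theorem intervalIntegral_comp_add_add_comp_sub {E : Type*} [NormedAddCommGroup E]
    [NormedSpace ℝ E] {f : ℝ → E} {a b c : ℝ}
    (h₁ : IntervalIntegrable f volume (c + a) (c + b))
    (h₂ : IntervalIntegrable f volume (c - b) (c - a)) :
    ∫ t in a..b, (f (c + t) + f (c - t))
      = (∫ y in c - b..c - a, f y) + ∫ y in c + a..c + b, f y := by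
  rw [intervalIntegral.integral_add (by simpa using h₁.comp_add_left c)
      (by simpa using (h₂.comp_sub_left c).symm),
    intervalIntegral.integral_comp_add_left, intervalIntegral.integral_comp_sub_left, add_comm]

noncomputable def auxSymm (α x t : ℝ) : ℝ :=
  auxIntegrand α x (x + t) + auxIntegrand α x (x - t)

theorem auxTrunc_eq_add_integral_auxSymm {α x ε δ : ℝ} (hα₀ : 0 < α) (hα₂ : α < 2)
    (hε : 0 < ε) (hεδ : ε ≤ δ) (hδx : δ < x) :
    auxTrunc α x ε = auxTrunc α x δ + ∫ t in ε..δ, auxSymm α x t := by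
  have hx : 0 < x := by linarith
  have hδ : 0 < δ := hε.trans_le hεδ
  have hleft : IntervalIntegrable (auxIntegrand α x) volume 0 (x - ε) :=
    (intervalIntegrable_iff_integrableOn_Ioo_of_le (by linarith)).2
      (integrableOn_auxIntegrand_Ioo hα₀.le hα₂ hε)
  have hright : IntervalIntegrable (auxIntegrand α x) volume (x + ε) (x + δ) :=
    (intervalIntegrable_iff_integrableOn_Ioc_of_le (by linarith)).2
      ((integrableOn_auxIntegrand_Ioi hα₀ hx hε).mono_set Ioc_subset_Ioi_self)
  have hsub : ∀ {a b}, 0 ≤ a → a ≤ b → b ≤ x - ε →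
      IntervalIntegrable (auxIntegrand α x) volume a b := fun ha hab hb =>
    hleft.mono_set (by
      rw [uIcc_of_le hab, uIcc_of_le (by linarith)]; exact Icc_subset_Icc ha hb)
  unfold auxSymm
  rw [intervalIntegral_comp_add_add_comp_sub hright (hsub (by linarith) (by linarith) le_rfl),
    auxTrunc_eq hα₀ hα₂ hx hε (by linarith), auxTrunc_eq hα₀ hα₂ hx hδ hδx.le,
    ← intervalIntegral.integral_add_adjacent_intervals (b := x - δ)
      (hsub le_rfl (by linarith) (by linarith)) (hsub (by linarith) (by linarith) le_rfl),
    ← intervalIntegral.integral_interval_add_Ioi' hright (integrableOn_auxIntegrand_Ioi hα₀ hx hδ)]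
  ring

theorem abs_add_add_sub_two_mul_le {f f' : ℝ → ℝ} {a h M : ℝ}
    (hf : ∀ s ∈ Icc (a - h) (a + h), HasDerivAt f (f' s) s)
    (hf' : ∀ s ∈ Icc (a - h) (a + h), ∀ s' ∈ Icc (a - h) (a + h), |f' s - f' s'| ≤ M * |s - s'|)
    {t : ℝ} (ht : t ∈ Icc 0 h) : |f (a + t) + f (a - t) - 2 * f a| ≤ M * t ^ 2 := by
  have hmem : ∀ s ∈ Icc 0 h, a + s ∈ Icc (a - h) (a + h) ∧ a - s ∈ Icc (a - h) (a + h) :=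
    fun s hs => ⟨⟨by linarith [hs.1, hs.2], by linarith [hs.2]⟩,
      ⟨by linarith [hs.2], by linarith [hs.1, hs.2]⟩⟩
  have hderiv : ∀ s ∈ Icc 0 h, HasDerivAt (fun s => f (a + s) + f (a - s) - 2 * f a)
      (f' (a + s) - f' (a - s)) s := fun s hs => by
    have h₁ := (hf _ (hmem s hs).1).comp s ((hasDerivAt_id s).const_add a)
    have h₂ := (hf _ (hmem s hs).2).comp s ((hasDerivAt_id s).const_sub a)
    simpa [sub_eq_add_neg] using (h₁.add h₂).sub_const (2 * f a)
  refine image_norm_le_of_norm_deriv_right_le_deriv_boundary (B := fun s => M * s ^ 2)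
    (B' := fun s => M * (2 * s)) (fun s hs => (hderiv s hs).continuousAt.continuousWithinAt)
    (fun s hs => (hderiv s (Ico_subset_Icc_self hs)).hasDerivWithinAt) (by simp [two_mul])
    (fun s => ((hasDerivAt_pow 2 s).const_mul M).congr_deriv (by norm_num)) (fun s hs => ?_) ht
  obtain ⟨hs₁, hs₂⟩ := hmem s (Ico_subset_Icc_self hs)
  calc ‖f' (a + s) - f' (a - s)‖ ≤ M * |a + s - (a - s)| := hf' _ hs₁ _ hs₂
    _ = M * (2 * s) := by
        rw [show a + s - (a - s) = 2 * s by ring, abs_of_nonneg (by linarith [hs.1])]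

theorem abs_mul_rpow_sub_one_sub_le {p c s s' : ℝ} (hp : p ≤ 2) (hc : 0 < c) (hs : c ≤ s)
    (hs' : c ≤ s') :
    |p * s ^ (p - 1) - p * s' ^ (p - 1)| ≤ |p * (p - 1)| * c ^ (p - 2) * |s - s'| := by
  have hderiv : ∀ u ∈ Ici c, HasDerivWithinAt (fun u => p * u ^ (p - 1))
      (p * (p - 1) * u ^ (p - 2)) (Ici c) u := fun u hu => by
    have := (Real.hasDerivAt_rpow_const (p := p - 1) (Or.inl (hc.trans_le hu).ne')).const_mul p
    rw [show p - 1 - 1 = p - 2 by ring, ← mul_assoc] at this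
    exact this.hasDerivWithinAt
  have hbound : ∀ u ∈ Ici c, ‖p * (p - 1) * u ^ (p - 2)‖ ≤ |p * (p - 1)| * c ^ (p - 2) :=
    fun u hu => by
      rw [Real.norm_eq_abs, abs_mul, abs_of_nonneg (Real.rpow_nonneg (hc.le.trans hu) _)]
      exact mul_le_mul_of_nonneg_left
        (Real.rpow_le_rpow_of_nonpos hc hu (by linarith : p - 2 ≤ 0)) (abs_nonneg _)
  exact (convex_Ici c).norm_image_sub_le_of_norm_hasDerivWithin_le hderiv hbound hs' hs

theorem abs_rpow_add_rpow_sub_two_mul_le {p x t : ℝ} (hp : p ≤ 2) (hx : 0 < x)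
    (ht : t ∈ Icc 0 (x / 2)) :
    |(x + t) ^ p + (x - t) ^ p - 2 * x ^ p| ≤ |p * (p - 1)| * (x / 2) ^ (p - 2) * t ^ 2 :=
  abs_add_add_sub_two_mul_le
    (fun s hs => Real.hasDerivAt_rpow_const (Or.inl (by linarith [hs.1] : (0 : ℝ) < s).ne'))
    (fun s hs s' hs' => abs_mul_rpow_sub_one_sub_le hp (half_pos hx) (by linarith [hs.1])
      (by linarith [hs'.1])) ht

theorem auxSymm_eq {α x t : ℝ} (ht : 0 < t) :
    auxSymm α x t
      = -((x + t) ^ (-(α / 2)) + (x - t) ^ (-(α / 2)) - 2 * x ^ (-(α / 2))) / t ^ (1 + α) := by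
  rw [auxSymm, auxIntegrand, auxIntegrand, show x - (x + t) = -t by ring,
    show x - (x - t) = t by ring, abs_neg, abs_of_pos ht, ← add_div]
  ring

theorem abs_auxSymm_le {α x t : ℝ} (hα : 0 ≤ α) (hx : 0 < x) (ht : t ∈ Ioc 0 (x / 2)) :
    |auxSymm α x t|
      ≤ |-(α / 2) * (-(α / 2) - 1)| * (x / 2) ^ (-(α / 2) - 2) * t ^ (1 - α) := by
  have ht₀ := ht.1
  rw [auxSymm_eq ht₀, abs_div, abs_neg, abs_of_pos (Real.rpow_pos_of_pos ht₀ _),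
    div_le_iff₀ (Real.rpow_pos_of_pos ht₀ _), mul_assoc, ← Real.rpow_add ht₀,
    show 1 - α + (1 + α) = (2 : ℕ) by norm_num, Real.rpow_natCast]
  exact abs_rpow_add_rpow_sub_two_mul_le (by linarith) hx ⟨ht₀.le, ht.2⟩

theorem intervalIntegrable_auxSymm {α x : ℝ} (hα₀ : 0 ≤ α) (hα₂ : α < 2) (hx : 0 < x) :
    IntervalIntegrable (auxSymm α x) volume 0 (x / 2) := by
  refine ((intervalIntegral.intervalIntegrable_rpow' (a := 0) (b := x / 2)
    (by linarith : -1 < 1 - α)).const_mul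
      (|-(α / 2) * (-(α / 2) - 1)| * (x / 2) ^ (-(α / 2) - 2))).mono_fun' ?_ ?_
  · unfold auxSymm
    exact ((measurable_auxIntegrand α x).comp (measurable_const_add x)).add
      ((measurable_auxIntegrand α x).comp (measurable_const.sub measurable_id))
      |>.aestronglyMeasurable
  · rw [uIoc_of_le (half_pos hx).le]
    exact (ae_restrict_iff' measurableSet_Ioc).2
      (Eventually.of_forall fun t ht => abs_auxSymm_le hα₀ hx ht)

theorem exists_auxFPV {α x : ℝ} (hα₀ : 0 < α) (hα₂ : α < 2) (hx : 0 < x) :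
    ∃ L, auxFPV α x L := by
  have hδ : 0 < x / 2 := half_pos hx
  have hint := (intervalIntegrable_iff_integrableOn_Icc_of_le hδ.le).1
    (intervalIntegrable_auxSymm hα₀.le hα₂ hx)
  have hcont : ContinuousWithinAt (fun ε => ∫ t in ε..x / 2, auxSymm α x t) (Ioi 0) 0 := by
    refine (intervalIntegral.continuousOn_primitive_interval_left ?_ 0 left_mem_uIcc)
      |>.mono_of_mem_nhdsWithin ?_
    · rwa [uIcc_of_le hδ.le]
    · rw [uIcc_of_le hδ.le]
      exact mem_of_superset (Ioc_mem_nhdsGT hδ) Ioc_subset_Icc_self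
  refine ⟨_, (hcont.tendsto.const_add (auxTrunc α x (x / 2))).congr' ?_⟩
  filter_upwards [Ioo_mem_nhdsGT hδ] with ε hε
  exact (auxTrunc_eq_add_integral_auxSymm hα₀ hα₂ hε.1 hε.2.le (by linarith)).symm

/-- Scaling of the auxiliary singular integral: for every `x > 0` the
principal value `F(x)` exists and is finite, and `F(λx) = λ^{-3α/2} F(x)` for all
`λ > 0`, `x > 0`; consequently `F(x) = F(1) x^{-3α/2}`. -/
theorem stmt6 (α : ℝ) (hα : 0 < α ∧ α < 2) :
    (∀ x : ℝ, 0 < x → ∃ L : ℝ, auxFPV α x L) ∧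
    ∀ F : ℝ → ℝ, (∀ x : ℝ, 0 < x → auxFPV α x (F x)) →
      (∀ lam : ℝ, 0 < lam → ∀ x : ℝ, 0 < x →
        F (lam * x) = lam ^ (-(3 * α / 2)) * F x) ∧
      (∀ x : ℝ, 0 < x → F x = F 1 * x ^ (-(3 * α / 2))) := by
  refine ⟨fun x hx => exists_auxFPV hα.1 hα.2 hx, fun F hF => ?_⟩
  have hscale : ∀ lam : ℝ, 0 < lam → ∀ x : ℝ, 0 < x →
      F (lam * x) = lam ^ (-(3 * α / 2)) * F x := fun lam hlam x hx =>
    tendsto_nhds_unique (hF _ (mul_pos hlam hx)) (auxFPV_mul hlam hx.le (hF x hx))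
  refine ⟨hscale, fun x hx => ?_⟩
  simpa [mul_comm] using hscale x hx 1 one_pos
end

section
/- (Final limit extraction.) Let α > 0 and let u : (0,∞) → (0,∞) be a function. Suppose that for every ε ∈ (0,1/2) there exists δ₀ ∈ (0,1/2) such that for every δ ∈ (0,δ₀) there exists x₀ > 0 with the following two inequalities holding for all x ≥ x₀, where a = a(x,δ) := x^{-α}(1-2δ)^{-α}/α: (i) u(x) ≤ (1+ε) · a / ( (1-ε) u(x)/2 + a ), and (ii) u(x) ≥ (1-2ε)^{-1} · a / ( (1+ε) u(x)/2 + a ). Then lim_{x→∞} x^{α} u(x)² = 2/α, and consequently u(x) ~ √(2/α) · x^{-α/2} as x → ∞. -/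
open Filter Topology Set

set_option maxHeartbeats 1000000

/-- Final limit extraction: if a positive function `u` on `(0,∞)`
satisfies, for every `ε ∈ (0,1/2)`, for all sufficiently small `δ > 0` and all
sufficiently large `x` (with `a = a(x,δ) = x^{-α}(1-2δ)^{-α}/α`) the inequalities
`u(x) ≤ (1+ε) a / ((1-ε)u(x)/2 + a)` and `u(x) ≥ (1-2ε)⁻¹ a / ((1+ε)u(x)/2 + a)`,
then `x^α u(x)² → 2/α` and consequently `u(x) ~ √(2/α) x^{-α/2}` as `x → ∞`. -/
theorem stmt11 (α : ℝ) (hα : 0 < α) (u : ℝ → ℝ)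
    (hpos : ∀ x : ℝ, 0 < x → 0 < u x)
    (h : ∀ ε : ℝ, ε ∈ Set.Ioo (0 : ℝ) (1 / 2) →
      ∃ δ₀ ∈ Set.Ioo (0 : ℝ) (1 / 2), ∀ δ ∈ Set.Ioo (0 : ℝ) δ₀,
        ∃ x₀ : ℝ, 0 < x₀ ∧ ∀ x : ℝ, x₀ ≤ x →
          u x ≤ (1 + ε) * (x ^ (-α) * (1 - 2 * δ) ^ (-α) / α) /
              ((1 - ε) * u x / 2 + x ^ (-α) * (1 - 2 * δ) ^ (-α) / α) ∧
          (1 - 2 * ε)⁻¹ * (x ^ (-α) * (1 - 2 * δ) ^ (-α) / α) /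
              ((1 + ε) * u x / 2 + x ^ (-α) * (1 - 2 * δ) ^ (-α) / α) ≤ u x) :
    Tendsto (fun x : ℝ => x ^ α * u x ^ 2) atTop (𝓝 (2 / α)) ∧
    Tendsto (fun x : ℝ => u x / (Real.sqrt (2 / α) * x ^ (-(α / 2)))) atTop (𝓝 1) := by
  have h2α : α * (2 / α) = 2 := by field_simp
  have key : Tendsto (fun x : ℝ => x ^ α * u x ^ 2) atTop (𝓝 (2 / α)) := by
    rw [Metric.tendsto_nhds]
    intro ε' hε'
    set ε : ℝ := min (1/4) (α * ε' / 20) with hεdef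
    have hε0 : 0 < ε := lt_min (by norm_num) (by positivity)
    have hε14 : ε ≤ 1/4 := min_le_left _ _
    have hε20 : ε ≤ α * ε' / 20 := min_le_right _ _
    have hεlt : ε < 1/2 := lt_of_le_of_lt hε14 (by norm_num)
    obtain ⟨δ₀, hδ₀, hδ⟩ := h ε ⟨hε0, hεlt⟩
    obtain ⟨hδ₀0, hδ₀2⟩ := hδ₀
    have h1ε : (0:ℝ) < 1 + ε := by linarith
    have hq : (1 + ε) ^ (-(1/α)) < 1 := by
      apply Real.rpow_lt_one_of_one_lt_of_neg (by linarith)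
      have : (0:ℝ) < 1/α := by positivity
      linarith
    have hqpos : (0:ℝ) < (1+ε) ^ (-(1/α)) := Real.rpow_pos_of_pos h1ε _
    set δ : ℝ := min (δ₀/2) ((1 - (1+ε) ^ (-(1/α)))/2) with hδdef
    have hδ0 : 0 < δ := lt_min (by linarith) (by linarith)
    have hδlt : δ < δ₀ := lt_of_le_of_lt (min_le_left _ _) (by linarith)
    obtain ⟨x₀, hx₀, hspec⟩ := hδ δ ⟨hδ0, hδlt⟩
    have hbq : (1+ε) ^ (-(1/α)) ≤ 1 - 2*δ := by
      have h1 := min_le_right (δ₀/2) ((1 - (1+ε) ^ (-(1/α)))/2)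
      rw [← hδdef] at h1
      linarith
    have hbpos : (0:ℝ) < 1 - 2*δ := lt_of_lt_of_le hqpos hbq
    have hble : 1 - 2*δ ≤ 1 := by linarith
    have hbapos : 0 < (1-2*δ)^α := Real.rpow_pos_of_pos hbpos α
    have hB1 : 1 ≤ (1 - 2*δ) ^ (-α) := by
      have h1 : (1-2*δ)^α ≤ 1 := Real.rpow_le_one hbpos.le hble hα.le
      rw [Real.rpow_neg hbpos.le]
      exact one_le_inv₀ hbapos |>.mpr h1
    have hB2 : (1 - 2*δ) ^ (-α) ≤ 1 + ε := by
      have h2 : ((1+ε) ^ (-(1/α)))^α ≤ (1-2*δ)^α :=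
        Real.rpow_le_rpow hqpos.le hbq hα.le
      have h3 : ((1+ε) ^ (-(1/α)))^α = (1+ε)⁻¹ := by
        rw [← Real.rpow_mul h1ε.le]
        rw [show -(1/α)*α = -1 by field_simp, Real.rpow_neg_one]
      rw [h3] at h2
      rw [Real.rpow_neg hbpos.le]
      exact inv_le_of_inv_le₀ h1ε h2
    set c : ℝ := ε^2*(1-ε)*α/(2*(1+ε)^2) with hcdef
    have hcpos : 0 < c :=
      div_pos (mul_pos (mul_pos (pow_pos hε0 2) (by linarith)) hα) (by positivity)
    have hceq : c * (2*(1+ε)^2) = ε^2*(1-ε)*α := by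
      rw [hcdef]; field_simp
    have hAev : ∀ᶠ x : ℝ in atTop, x ^ (-α) < c :=
      (tendsto_rpow_neg_atTop hα).eventually_lt_const hcpos
    filter_upwards [eventually_ge_atTop x₀, eventually_ge_atTop (1:ℝ), hAev]
      with x hxx₀ hx1 hxc
    have hx0 : (0:ℝ) < x := by linarith
    obtain ⟨hub, hlb⟩ := hspec x hxx₀
    set B : ℝ := (1 - 2*δ) ^ (-α) with hBdef
    set A : ℝ := x ^ (-α) with hAdef
    set v : ℝ := u x with hvdef
    have hA : 0 < A := Real.rpow_pos_of_pos hx0 _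
    have hu : 0 < v := hpos x hx0
    have hP : 0 < x ^ α := Real.rpow_pos_of_pos hx0 _
    have hPA : x ^ α * A = 1 := by
      rw [hAdef, ← Real.rpow_add hx0]; simp
    set a : ℝ := A * B / α with hadef
    have hB0 : (0:ℝ) < B := lt_of_lt_of_le one_pos hB1
    have ha : 0 < a := div_pos (mul_pos hA hB0) hα
    have haα : α * a = A * B := by rw [hadef]; field_simp
    have haα2 : (1+ε) * (α * a) = (1+ε) * (A * B) := by rw [haα]
    have hq1 : ε * (α * a) = ε * (A * B) := by rw [haα]
    have hD1 : 0 < (1 - ε) * v / 2 + a := by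
      have h' : 0 < (1 - ε) * v := mul_pos (by linarith) hu
      linarith
    have hD2 : 0 < (1 + ε) * v / 2 + a := by
      have h' : 0 < (1 + ε) * v := mul_pos (by linarith) hu
      linarith
    rw [le_div_iff₀ hD1] at hub
    rw [div_le_iff₀ hD2] at hlb
    have h2ε : (0:ℝ) < 1 - 2*ε := by linarith
    have hI1 : 1 ≤ (1-2*ε)⁻¹ := one_le_inv₀ h2ε |>.mpr (by linarith)
    -- upper bound chain
    have h1 : (1-ε)*v^2/2 ≤ (1+ε)*a := by
      linarith only [hub, mul_pos hu ha]
    have t1 := mul_le_mul_of_nonneg_left h1 hα.le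
    have t2 := mul_le_mul_of_nonneg_left (mul_le_mul_of_nonneg_left hB2 hA.le)
      (show (0:ℝ) ≤ 2*(1+ε) by linarith)
    have e2 : (1-ε)*α*v^2 ≤ 2*(1+ε)^2*A := by
      linarith only [t1, haα2, t2]
    have t3 := mul_le_mul_of_nonneg_left e2 hP.le
    have hPA2 : (2*(1+ε)^2) * (x^α * A) = 2*(1+ε)^2 := by rw [hPA]; ring
    have hU : (1-ε)*α*(x^α*v^2) ≤ 2*(1+ε)^2 := by
      linarith only [t3, hPA2]
    -- smallness of v
    have e3 : 2*(1+ε)^2*A ≤ 2*(1+ε)^2*c :=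
      mul_le_mul_of_nonneg_left hxc.le (by positivity)
    have e4 : (1-ε)*α*v^2 ≤ ε^2*(1-ε)*α := by
      linarith only [e2, e3, hceq]
    have hpos' : (0:ℝ) < (1-ε)*α := mul_pos (by linarith) hα
    have e5 : v^2 ≤ ε^2 :=
      le_of_mul_le_mul_left (by linarith only [e4]) hpos'
    have huε : v ≤ ε := by
      have hs := Real.sqrt_le_sqrt e5
      rwa [Real.sqrt_sq hu.le, Real.sqrt_sq hε0.le] at hs
    -- lower bound chain
    have tl := mul_nonneg
      (show (0:ℝ) ≤ (1-2*ε)⁻¹ - v - (1 - ε) by linarith only [hI1, huε]) ha.le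
    have h2 : (1-ε)*a ≤ (1+ε)*v^2/2 := by
      linarith only [hlb, tl]
    have t1' := mul_le_mul_of_nonneg_left h2 hα.le
    have e1' : 2*(1-ε)*(A*B) ≤ (1+ε)*α*v^2 := by
      linarith only [t1', haα, hq1]
    have t2' := mul_le_mul_of_nonneg_left (mul_le_mul_of_nonneg_left hB1 hA.le)
      (show (0:ℝ) ≤ 2*(1-ε) by linarith)
    have echain : 2*(1-ε)*A ≤ (1+ε)*α*v^2 := by
      linarith only [e1', t2']
    have t4 := mul_le_mul_of_nonneg_left echain hP.le
    have hPAε : ε * (x^α * A) = ε := by rw [hPA]; ring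
    have hL : 2*(1-ε) ≤ (1+ε)*α*(x^α*v^2) := by
      linarith only [t4, hPA, hPAε]
    -- numeric bound G ≤ 5 where G = α * (x^α * v^2)
    have hG0 : (0:ℝ) ≤ α*(x^α*v^2) := by positivity
    have hintG : ε*(α*(x^α*v^2)) ≤ (1/4)*(α*(x^α*v^2)) :=
      mul_le_mul_of_nonneg_right hε14 hG0
    have hintε2 : ε*ε ≤ (1/4)*ε := mul_le_mul_of_nonneg_right hε14 hε0.le
    have hG5 : α*(x^α*v^2) ≤ 5 := by
      linarith only [hU, hintG, hintε2, hε14, hε0]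
    have hintG5 : ε*(α*(x^α*v^2)) ≤ ε*5 := mul_le_mul_of_nonneg_left hG5 hε0.le
    have hαε' : 0 < α*ε' := mul_pos hα hε'
    -- conclude
    rw [Real.dist_eq, abs_lt]
    constructor
    · have g1 : α*(2/α - ε') < α*(x^α*v^2) := by
        linarith only [hL, hintG5, hε20, hαε', h2α]
      have g2 := lt_of_mul_lt_mul_left g1 hα.le
      linarith only [g2]
    · have g1 : α*(x^α*v^2) < α*(2/α + ε') := by
        linarith only [hU, hintε2, hintG5, hε20, hαε', h2α]
      have g2 := lt_of_mul_lt_mul_left g1 hα.le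
      linarith only [g2]
  have hs2 : (0:ℝ) < 2/α := by positivity
  have hsqrt0 : Real.sqrt (2/α) ≠ 0 := ne_of_gt (Real.sqrt_pos.mpr hs2)
  have t1 : Tendsto (fun x : ℝ => Real.sqrt (x^α * u x^2) / Real.sqrt (2/α))
      atTop (𝓝 1) := by
    have := (key.sqrt).div_const (Real.sqrt (2/α))
    rwa [div_self hsqrt0] at this
  refine ⟨key, t1.congr' ?_⟩
  filter_upwards [eventually_gt_atTop (0:ℝ)] with x hx
  have hu := hpos x hx
  have e1 : Real.sqrt (x^α * u x^2) = x^(α/2) * u x := by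
    rw [Real.sqrt_mul (Real.rpow_nonneg hx.le α), Real.sqrt_sq hu.le]
    congr 1
    rw [show x^α = (x^(α/2))^(2:ℝ) by
      rw [← Real.rpow_mul hx.le]; norm_num,
      Real.rpow_two, Real.sqrt_sq (Real.rpow_nonneg hx.le _)]
  have e2 : x ^ (-(α/2)) = (x^(α/2))⁻¹ := Real.rpow_neg hx.le _
  have hxp : x^(α/2) ≠ 0 := ne_of_gt (Real.rpow_pos_of_pos hx _)
  rw [e1, e2]
  field_simp
end
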